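/- Let α, λ > 0 and define R(t) := λ M(α; α+λ+1; t) / ((α+λ) M(α; α+λ; t)), where M is Kummer's confluent hypergeometric function. Then on any open interval of ℝ on which M(α; α+λ; t) ≠ 0, R satisfies the Riccati equation t R'(t) = t R(t)² − (α + λ + t) R(t) + λ. -/

import Mathlib

/-!
Since `0 < α ≤ α + λ`, the coefficients of both Kummer series are dominated by `1 / k!`, so the
series can be differentiated termwise on all of `ℝ`. Comparing coefficients, using
`b (b + 1)_k = (b)_k (b + k)`, gives the contiguous relations
`b M'(a; b) = b M(a; b) - (b - a) M(a; b + 1)` and `t M'(a; b + 1) = b (M(a; b) - M(a; b + 1))`.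
For `a = α`, `b = α + λ` the quotient rule turns these two relations into the Riccati equation.
-/

/-- Kummer's confluent hypergeometric function of the first kind,
M(a; b; t) = Σ_{k≥0} ((a)_k/(b)_k) t^k / k!. -/
noncomputable def kummerM (a b t : ℝ) : ℝ :=
  ∑' k : ℕ, ((ascPochhammer ℝ k).eval a / (ascPochhammer ℝ k).eval b) * t ^ k / (Nat.factorial k)

section EntireSeries

variable {c : ℕ → ℝ}

theorem summable_mul_pow_of_abs_le_inv_factorial (hc : ∀ k, |c k| ≤ 1 / k.factorial) (t : ℝ) :
    Summable fun k => c k * t ^ k := by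
  refine .of_norm_bounded (Real.summable_pow_div_factorial |t|) fun k => ?_
  rw [norm_mul, norm_pow, Real.norm_eq_abs, Real.norm_eq_abs, ← one_div_mul_eq_div]
  gcongr
  exact hc k

theorem abs_succ_mul_succ_le_inv_factorial (hc : ∀ k, |c k| ≤ 1 / k.factorial) (k : ℕ) :
    |((k : ℝ) + 1) * c (k + 1)| ≤ 1 / k.factorial := by
  have h := hc (k + 1)
  rw [Nat.factorial_succ] at h
  push_cast at h
  rw [abs_mul, abs_of_pos (by positivity)]
  calc ((k : ℝ) + 1) * |c (k + 1)| ≤ ((k : ℝ) + 1) * (1 / ((k + 1) * k.factorial)) := by gcongr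
    _ = 1 / k.factorial := by field_simp

theorem summable_mul_natCast_mul_pow_sub_one_of_abs_le_inv_factorial
    (hc : ∀ k, |c k| ≤ 1 / k.factorial) (t : ℝ) :
    Summable fun k => c k * (k * t ^ (k - 1)) := by
  refine (summable_nat_add_iff 1).mp ?_
  refine (summable_mul_pow_of_abs_le_inv_factorial (abs_succ_mul_succ_le_inv_factorial hc) t).congr
    fun k => ?_
  rw [Nat.add_sub_cancel]
  push_cast
  ring

theorem tsum_mul_natCast_mul_pow_sub_one_eq (hc : ∀ k, |c k| ≤ 1 / k.factorial) (t : ℝ) :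
    ∑' k, c k * (k * t ^ (k - 1)) = ∑' k : ℕ, ((k : ℝ) + 1) * c (k + 1) * t ^ k := by
  rw [(summable_mul_natCast_mul_pow_sub_one_of_abs_le_inv_factorial hc t).tsum_eq_zero_add]
  simp only [Nat.cast_zero, zero_mul, mul_zero, zero_add, Nat.add_sub_cancel, Nat.cast_add,
    Nat.cast_one]
  exact tsum_congr fun k => by ring

theorem hasDerivAt_tsum_mul_pow_of_abs_le_inv_factorial (hc : ∀ k, |c k| ≤ 1 / k.factorial)
    (t : ℝ) :
    HasDerivAt (fun s => ∑' k, c k * s ^ k) (∑' k : ℕ, ((k : ℝ) + 1) * c (k + 1) * t ^ k) t := by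
  set r := |t| + 1
  have hinv : ∀ k : ℕ, |(1 / k.factorial : ℝ)| ≤ 1 / k.factorial :=
    fun k => (abs_of_pos (by positivity)).le
  have ht : t ∈ Metric.ball (0 : ℝ) r := by simp [r]
  rw [← tsum_mul_natCast_mul_pow_sub_one_eq hc]
  refine hasDerivAt_tsum_of_isPreconnected
    (summable_mul_natCast_mul_pow_sub_one_of_abs_le_inv_factorial hinv r) Metric.isOpen_ball
    (convex_ball _ _).isPreconnected (fun k y _ => (hasDerivAt_pow k y).const_mul (c k))
    (fun k y hy => ?_) ht (summable_mul_pow_of_abs_le_inv_factorial hc t) ht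
  have hy : |y| ≤ r := by simpa using (Metric.mem_ball.mp hy).le
  rw [norm_mul, norm_mul, norm_pow, Real.norm_eq_abs, Real.norm_eq_abs, Real.norm_eq_abs,
    Nat.abs_cast]
  gcongr
  exact hc k

theorem mul_tsum_succ_mul_succ_mul_pow (hc : ∀ k, |c k| ≤ 1 / k.factorial) (t : ℝ) :
    t * ∑' k : ℕ, ((k : ℝ) + 1) * c (k + 1) * t ^ k = ∑' k : ℕ, k * c k * t ^ k := by
  have hsum : Summable fun k : ℕ => ((k + 1 : ℕ) : ℝ) * c (k + 1) * t ^ (k + 1) := by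
    refine ((summable_mul_pow_of_abs_le_inv_factorial
      (abs_succ_mul_succ_le_inv_factorial hc) t).mul_left t).congr fun k => ?_
    push_cast
    ring
  rw [tsum_eq_zero_add' (f := fun k : ℕ => (k : ℝ) * c k * t ^ k) hsum, ← tsum_mul_left]
  simp only [Nat.cast_zero, zero_mul, zero_add]
  exact tsum_congr fun k => by push_cast; ring

end EntireSeries

theorem ascPochhammer_eval_nonneg {a : ℝ} (ha : 0 ≤ a) (k : ℕ) :
    0 ≤ (ascPochhammer ℝ k).eval a := by
  induction k with
  | zero => simp
  | succ k ih => rw [ascPochhammer_succ_eval]; exact mul_nonneg ih (add_nonneg ha k.cast_nonneg)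

theorem ascPochhammer_eval_le_of_le {a b : ℝ} (ha : 0 ≤ a) (hab : a ≤ b) (k : ℕ) :
    (ascPochhammer ℝ k).eval a ≤ (ascPochhammer ℝ k).eval b := by
  induction k with
  | zero => simp
  | succ k ih =>
    rw [ascPochhammer_succ_eval, ascPochhammer_succ_eval]
    exact mul_le_mul ih (by linarith) (by positivity) ((ascPochhammer_eval_nonneg ha k).trans ih)

theorem mul_ascPochhammer_eval_add_one {S : Type*} [CommSemiring S] (b : S) (k : ℕ) :
    b * (ascPochhammer S k).eval (b + 1) = (ascPochhammer S k).eval b * (b + k) := by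
  rw [← ascPochhammer_succ_eval, ascPochhammer_succ_left]
  simp [Polynomial.eval_comp]

noncomputable def kummerCoeff (a b : ℝ) (k : ℕ) : ℝ :=
  (ascPochhammer ℝ k).eval a / (ascPochhammer ℝ k).eval b / k.factorial

theorem kummerM_eq_tsum (a b t : ℝ) : kummerM a b t = ∑' k, kummerCoeff a b k * t ^ k :=
  tsum_congr fun k => by rw [kummerCoeff]; ring

section Kummer

variable {a b : ℝ}

theorem abs_kummerCoeff_le (ha : 0 ≤ a) (hab : a ≤ b) (k : ℕ) :
    |kummerCoeff a b k| ≤ 1 / k.factorial := by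
  have hA := ascPochhammer_eval_nonneg ha k
  have hAB := ascPochhammer_eval_le_of_le ha hab k
  rw [kummerCoeff, abs_of_nonneg (div_nonneg (div_nonneg hA (hA.trans hAB)) (by positivity))]
  gcongr
  exact div_le_one_of_le₀ hAB (hA.trans hAB)

theorem succ_mul_kummerCoeff_succ (hb : 0 < b) (k : ℕ) :
    b * (((k : ℝ) + 1) * kummerCoeff a b (k + 1))
      = b * kummerCoeff a b k - (b - a) * kummerCoeff a (b + 1) k := by
  have hrel := mul_ascPochhammer_eval_add_one b k
  have hB := ascPochhammer_pos k b hb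
  have hB' := ascPochhammer_pos k (b + 1) (by linarith)
  simp only [kummerCoeff, ascPochhammer_succ_eval, Nat.factorial_succ, Nat.cast_mul, Nat.cast_succ]
  field_simp
  linear_combination (a - b) * (ascPochhammer ℝ k).eval a * hrel

theorem natCast_mul_kummerCoeff_add_one (hb : 0 < b) (k : ℕ) :
    k * kummerCoeff a (b + 1) k = b * (kummerCoeff a b k - kummerCoeff a (b + 1) k) := by
  have hrel := mul_ascPochhammer_eval_add_one b k
  have hB := ascPochhammer_pos k b hb
  have hB' := ascPochhammer_pos k (b + 1) (by linarith)
  simp only [kummerCoeff]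
  field_simp
  linear_combination -(ascPochhammer ℝ k).eval a * hrel

theorem hasDerivAt_kummerM (ha : 0 ≤ a) (hab : a ≤ b) (t : ℝ) :
    HasDerivAt (kummerM a b) (∑' k : ℕ, ((k : ℝ) + 1) * kummerCoeff a b (k + 1) * t ^ k) t := by
  rw [show kummerM a b = _ from funext (kummerM_eq_tsum a b)]
  exact hasDerivAt_tsum_mul_pow_of_abs_le_inv_factorial (abs_kummerCoeff_le ha hab) t

theorem differentiable_kummerM (ha : 0 ≤ a) (hab : a ≤ b) : Differentiable ℝ (kummerM a b) :=
  fun t => (hasDerivAt_kummerM ha hab t).differentiableAt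

theorem mul_deriv_kummerM (ha : 0 ≤ a) (hb : 0 < b) (hab : a ≤ b) (t : ℝ) :
    b * deriv (kummerM a b) t = b * kummerM a b t - (b - a) * kummerM a (b + 1) t := by
  have hab' : a ≤ b + 1 := by linarith
  rw [(hasDerivAt_kummerM ha hab t).deriv, kummerM_eq_tsum, kummerM_eq_tsum, ← tsum_mul_left,
    ← tsum_mul_left, ← tsum_mul_left, ← Summable.tsum_sub]
  · exact tsum_congr fun k => by rw [← mul_assoc, succ_mul_kummerCoeff_succ hb]; ring
  · exact (summable_mul_pow_of_abs_le_inv_factorial (abs_kummerCoeff_le ha hab) t).mul_left b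
  · exact (summable_mul_pow_of_abs_le_inv_factorial (abs_kummerCoeff_le ha hab') t).mul_left _

theorem mul_deriv_kummerM_add_one (ha : 0 ≤ a) (hb : 0 < b) (hab : a ≤ b) (t : ℝ) :
    t * deriv (kummerM a (b + 1)) t = b * (kummerM a b t - kummerM a (b + 1) t) := by
  have hab' : a ≤ b + 1 := by linarith
  rw [(hasDerivAt_kummerM ha hab' t).deriv,
    mul_tsum_succ_mul_succ_mul_pow (abs_kummerCoeff_le ha hab'), kummerM_eq_tsum,
    kummerM_eq_tsum, ← Summable.tsum_sub, ← tsum_mul_left]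
  · exact tsum_congr fun k => by rw [natCast_mul_kummerCoeff_add_one hb]; ring
  · exact summable_mul_pow_of_abs_le_inv_factorial (abs_kummerCoeff_le ha hab) t
  · exact summable_mul_pow_of_abs_le_inv_factorial (abs_kummerCoeff_le ha hab') t

end Kummer

theorem kummer_ratio_riccati_laguerre_general
    (α lam : ℝ) (hα : 0 < α) (hlam : 0 < lam)
    (I : Set ℝ)
    (hM : ∀ t ∈ I, kummerM α (α + lam) t ≠ 0)
    (R : ℝ → ℝ)
    (hR : ∀ t, R t = lam * kummerM α (α + lam + 1) t / ((α + lam) * kummerM α (α + lam) t)) :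
    ∀ t ∈ I, t * deriv R t = t * (R t) ^ 2 - (α + lam + t) * R t + lam := by
  intro t ht
  have hb : 0 < α + lam := by linarith
  have hab : α ≤ α + lam := by linarith
  have hMt := hM t ht
  have hD := (differentiable_kummerM hα.le hab t).hasDerivAt
  have hN := (differentiable_kummerM hα.le (show α ≤ α + lam + 1 by linarith) t).hasDerivAt
  have hRderiv := (hN.const_mul lam).fun_div (hD.const_mul (α + lam)) (mul_ne_zero hb.ne' hMt)
  rw [← funext hR] at hRderiv
  rw [hRderiv.deriv, hR t]
  have hDt := mul_deriv_kummerM hα.le hb hab t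
  have hNt := mul_deriv_kummerM_add_one hα.le hb hab t
  field_simp
  linear_combination (α + lam) * kummerM α (α + lam) t * hNt - t * kummerM α (α + lam + 1) t * hDt

/-- The ratio R(t) = λ M(α; α+λ+1; t) / ((α+λ) M(α; α+λ; t)) satisfies the Riccati
equation t R' = t R² − (α+λ+t) R + λ. -/
theorem kummer_ratio_riccati_laguerre
    (α lam : ℝ) (hα : 0 < α) (hlam : 0 < lam)
    (I : Set ℝ) (hI : IsOpen I) (hIconn : I.OrdConnected)
    (hM : ∀ t ∈ I, kummerM α (α + lam) t ≠ 0)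
    (R : ℝ → ℝ)
    (hR : ∀ t, R t = lam * kummerM α (α + lam + 1) t / ((α + lam) * kummerM α (α + lam) t)) :
    ∀ t ∈ I, t * deriv R t = t * (R t) ^ 2 - (α + lam + t) * R t + lam :=
  kummer_ratio_riccati_laguerre_general α lam hα hlam I hM R hR
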